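/- Let X_1,…,X_T, Y_1,…,Y_T, U_1,…,U_T be finite-valued random processes on a common probability space satisfying, for each t ∈ {1,…,T}: (i) X^t and U_t are conditionally independent given (Y^t, U^{t−1}) (the control input is generated from the disclosed outputs and past inputs); and (ii) X_t and Y^{t−1} are conditionally independent given (X^{t−1}, U^{t−1}) (the plant state evolves from past states and inputs). Then I(X^T→U^T) ≤ I(X^T→Y^T‖U^{T−1}), i.e., Σ_{t=1}^T I(X^t; U_t | U^{t−1}) ≤ Σ_{t=1}^T I(X^t; Y_t | Y^{t−1}, U^{t−1}). -/

import Mathlib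

/-- The distribution of a random variable `X` on a finite probability space
with weights `p`. -/
noncomputable def distOf {Ω α : Type} [Fintype Ω] [DecidableEq α]
    (p : Ω → ℝ) (X : Ω → α) : α → ℝ :=
  fun a => ∑ ω : Ω, if X ω = a then p ω else 0

/-- Shannon entropy `H(X) = -∑ₓ P(X=x) log P(X=x)`. -/
noncomputable def entropy {Ω α : Type} [Fintype Ω] [Fintype α] [DecidableEq α]
    (p : Ω → ℝ) (X : Ω → α) : ℝ :=
  ∑ a : α, Real.negMulLog (distOf p X a)

/-- The conditional probability weights given the event `Z = z`. -/
noncomputable def condProb {Ω γ : Type} [Fintype Ω] [DecidableEq γ]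
    (p : Ω → ℝ) (Z : Ω → γ) (z : γ) : Ω → ℝ :=
  fun ω => if Z ω = z then p ω / distOf p Z z else 0

/-- Conditional entropy `H(X|Z) = ∑_z P(Z=z) H(X|Z=z)`. -/
noncomputable def condEntropy {Ω α γ : Type} [Fintype Ω] [Fintype α] [Fintype γ]
    [DecidableEq α] [DecidableEq γ] (p : Ω → ℝ) (X : Ω → α) (Z : Ω → γ) : ℝ :=
  ∑ z : γ, distOf p Z z * entropy (condProb p Z z) X

/-- Mutual information `I(X;Y) = H(X) - H(X|Y)`. -/
noncomputable def mutualInfo {Ω α β : Type} [Fintype Ω] [Fintype α] [Fintype β]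
    [DecidableEq α] [DecidableEq β] (p : Ω → ℝ) (X : Ω → α) (Y : Ω → β) : ℝ :=
  entropy p X - condEntropy p X Y

/-- Conditional mutual information `I(X;Y|Z) = ∑_z P(Z=z) I(X;Y|Z=z)`. -/
noncomputable def condMutualInfo {Ω α β γ : Type} [Fintype Ω] [Fintype α] [Fintype β]
    [Fintype γ] [DecidableEq α] [DecidableEq β] [DecidableEq γ]
    (p : Ω → ℝ) (X : Ω → α) (Y : Ω → β) (Z : Ω → γ) : ℝ :=
  ∑ z : γ, distOf p Z z * mutualInfo (condProb p Z z) X Y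

/-- Conditional independence of `A` and `B` given `C`:
`P(A=a,B=b,C=c) P(C=c) = P(A=a,C=c) P(B=b,C=c)` for all `a, b, c`. -/
def CondIndep {Ω α β γ : Type} [Fintype Ω] [DecidableEq α] [DecidableEq β] [DecidableEq γ]
    (p : Ω → ℝ) (A : Ω → α) (B : Ω → β) (C : Ω → γ) : Prop :=
  ∀ (a : α) (b : β) (c : γ),
    distOf p (fun ω => (A ω, B ω, C ω)) (a, b, c) * distOf p C c =
      distOf p (fun ω => (A ω, C ω)) (a, c) * distOf p (fun ω => (B ω, C ω)) (b, c)

/-- The block `X^t = (X_1, …, X_t)` of a process (0-based: the first `t` entries). -/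
def prefixRV {Ω 𝒳 : Type} (X : ℕ → Ω → 𝒳) (t : ℕ) : Ω → (Fin t → 𝒳) :=
  fun ω i => X i ω

/-!
All information quantities are rewritten as signed sums of joint entropies, and the entropy of a
random variable depends only on the partition of `Ω` it induces (its `Setoid.ker`); the chain
rule, symmetry and reshuffling of tuples then become linear identities.

Put `b t = I(X^t; Y^t | U^t)`. By the chain rule, the control condition (i) gives
`I(X^{t+1}; U_t | U^t) = I(X^{t+1}; Y^t | U^t) + I(X^{t+1}; Y_t | Y^t, U^t) - b (t+1)`, and the
plant condition (ii) gives `I(X^{t+1}; Y^t | U^t) = b t`. Summing over `t`, the left-hand side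
exceeds the right-hand side by the telescoping sum `b 0 - b T = -b T ≤ 0`.
-/

open Finset Real

section Distribution

variable {Ω α γ : Type} [Fintype Ω] [DecidableEq α] [DecidableEq γ] {p : Ω → ℝ}

lemma distOf_nonneg (hp0 : ∀ ω, 0 ≤ p ω) (X : Ω → α) (a : α) : 0 ≤ distOf p X a :=
  sum_nonneg fun ω _ => by split_ifs <;> simp [hp0 ω]

lemma distOf_self_pos (hp0 : ∀ ω, 0 ≤ p ω) (X : Ω → α) {ω : Ω} (hω : 0 < p ω) :
    0 < distOf p X (X ω) :=
  hω.trans_le <| by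
    simpa [distOf] using single_le_sum (f := fun ω' => if X ω' = X ω then p ω' else 0)
      (fun ω' _ => by split_ifs <;> simp [hp0 ω']) (mem_univ ω)

lemma distOf_pair_le (hp0 : ∀ ω, 0 ≤ p ω) (X : Ω → α) (Z : Ω → γ) (x : α) (z : γ) :
    distOf p (fun ω => (X ω, Z ω)) (x, z) ≤ distOf p Z z :=
  sum_le_sum fun ω _ => by
    by_cases hx : X ω = x <;> by_cases hz : Z ω = z <;> simp [hx, hz, hp0 ω]

lemma sum_distOf_mul [Fintype α] (p : Ω → ℝ) (X : Ω → α) (f : α → ℝ) :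
    ∑ a, distOf p X a * f a = ∑ ω, p ω * f (X ω) := by
  simp only [distOf, sum_mul, ite_mul, zero_mul]
  rw [sum_comm]
  simp

lemma sum_distOf [Fintype α] (p : Ω → ℝ) (X : Ω → α) : ∑ a, distOf p X a = ∑ ω, p ω := by
  simpa using sum_distOf_mul p X 1

lemma sum_distOf_pair [Fintype α] (p : Ω → ℝ) (X : Ω → α) (Z : Ω → γ) (z : γ) :
    ∑ x, distOf p (fun ω => (X ω, Z ω)) (x, z) = distOf p Z z := by
  simp only [distOf, Prod.mk.injEq, ite_and]
  rw [sum_comm]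
  simp

lemma distOf_condProb (Z : Ω → γ) (z : γ) (X : Ω → α) (x : α) :
    distOf (condProb p Z z) X x = distOf p (fun ω => (X ω, Z ω)) (x, z) / distOf p Z z := by
  simp only [distOf, condProb, sum_div]
  refine sum_congr rfl fun ω _ => ?_
  by_cases hx : X ω = x <;> by_cases hz : Z ω = z <;> simp [hx, hz]

lemma sum_condProb {Z : Ω → γ} {z : γ} (hz : distOf p Z z ≠ 0) :
    ∑ ω, condProb p Z z ω = 1 := by
  have h ω : condProb p Z z ω = (if Z ω = z then p ω else 0) / distOf p Z z := by
    unfold condProb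
    split_ifs <;> simp
  rw [sum_congr rfl fun ω _ => h ω, ← sum_div]
  exact div_self hz

lemma condProb_nonneg (hp0 : ∀ ω, 0 ≤ p ω) (Z : Ω → γ) (z : γ) (ω : Ω) :
    0 ≤ condProb p Z z ω := by
  unfold condProb
  split_ifs
  · exact div_nonneg (hp0 ω) (distOf_nonneg hp0 Z z)
  · exact le_rfl

lemma distOf_self_congr {W : Ω → α} {W' : Ω → γ} (h : Setoid.ker W = Setoid.ker W') (ω : Ω) :
    distOf p W (W ω) = distOf p W' (W' ω) :=
  sum_congr rfl fun ω' _ => if_congr (by rw [← Setoid.ker_def, h, Setoid.ker_def]) rfl rfl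

end Distribution

section Entropy

variable {Ω α β γ : Type} [Fintype Ω] [Fintype α] [Fintype β] [Fintype γ]
  [DecidableEq α] [DecidableEq β] [DecidableEq γ] {p : Ω → ℝ}

lemma entropy_eq_sum (p : Ω → ℝ) (X : Ω → α) :
    entropy p X = -∑ ω, p ω * log (distOf p X (X ω)) := by
  simp only [entropy, negMulLog, neg_mul, sum_neg_distrib]
  rw [sum_distOf_mul p X fun a => log (distOf p X a)]

lemma entropy_congr {W : Ω → α} {W' : Ω → β} (h : Setoid.ker W = Setoid.ker W') :
    entropy p W = entropy p W' := by
  simp only [entropy_eq_sum, distOf_self_congr h]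

lemma condEntropy_eq (hp0 : ∀ ω, 0 ≤ p ω) (X : Ω → α) (Z : Ω → γ) :
    condEntropy p X Z = entropy p (fun ω => (X ω, Z ω)) - entropy p Z := by
  have hterm x z : distOf p Z z * negMulLog (distOf (condProb p Z z) X x) =
      negMulLog (distOf p (fun ω => (X ω, Z ω)) (x, z)) +
        distOf p (fun ω => (X ω, Z ω)) (x, z) * log (distOf p Z z) := by
    rw [distOf_condProb]
    rcases eq_or_ne (distOf p Z z) 0 with hz | hz
    · have hxz : distOf p (fun ω => (X ω, Z ω)) (x, z) = 0 :=
        le_antisymm (hz ▸ distOf_pair_le hp0 X Z x z) (distOf_nonneg hp0 _ _)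
      simp [hz, hxz]
    · rcases eq_or_ne (distOf p (fun ω => (X ω, Z ω)) (x, z)) 0 with hxz | hxz
      · simp [hxz]
      · simp only [negMulLog, log_div hxz hz]
        field_simp
        ring
  have hjoint : entropy p (fun ω => (X ω, Z ω)) =
      ∑ z, ∑ x, negMulLog (distOf p (fun ω => (X ω, Z ω)) (x, z)) := by
    rw [entropy, Fintype.sum_prod_type, sum_comm]
  have hcond : entropy p Z = -∑ z, distOf p Z z * log (distOf p Z z) := by
    simp only [entropy, negMulLog, neg_mul, sum_neg_distrib]
  rw [hjoint, hcond, condEntropy]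
  simp only [entropy, mul_sum, hterm, sum_add_distrib, ← sum_mul, sum_distOf_pair]
  ring

lemma mutualInfo_eq (hp0 : ∀ ω, 0 ≤ p ω) (X : Ω → α) (Y : Ω → β) :
    mutualInfo p X Y = entropy p X + entropy p Y - entropy p (fun ω => (X ω, Y ω)) := by
  rw [mutualInfo, condEntropy_eq hp0]
  ring

lemma condMutualInfo_eq (hp0 : ∀ ω, 0 ≤ p ω) (X : Ω → α) (Y : Ω → β) (Z : Ω → γ) :
    condMutualInfo p X Y Z =
      entropy p (fun ω => (X ω, Z ω)) + entropy p (fun ω => (Y ω, Z ω)) -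
        entropy p (fun ω => (X ω, Y ω, Z ω)) - entropy p Z := by
  have hcond : condMutualInfo p X Y Z = condEntropy p X Z + condEntropy p Y Z -
      condEntropy p (fun ω => (X ω, Y ω)) Z := by
    simp only [condMutualInfo, condEntropy, mutualInfo_eq (condProb_nonneg hp0 Z _), mul_add,
      mul_sub, sum_add_distrib, sum_sub_distrib]
  have hassoc : entropy p (fun ω => ((X ω, Y ω), Z ω)) = entropy p (fun ω => (X ω, Y ω, Z ω)) :=
    entropy_congr <| Setoid.ext fun _ _ => by simp only [Setoid.ker_def, Prod.ext_iff, and_assoc]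
  rw [hcond, condEntropy_eq hp0, condEntropy_eq hp0, condEntropy_eq hp0, hassoc]
  ring

end Entropy

lemma Setoid.ker_prodMk_congr {Ω α α' β β' : Type} {A : Ω → α} {A' : Ω → α'} {B : Ω → β}
    {B' : Ω → β'} (hA : Setoid.ker A = Setoid.ker A') (hB : Setoid.ker B = Setoid.ker B') :
    Setoid.ker (fun ω => (A ω, B ω)) = Setoid.ker fun ω => (A' ω, B' ω) :=
  Setoid.ext fun a b => by
    simp only [Setoid.ker_def, Prod.mk.injEq]
    exact and_congr (Setoid.ext_iff.1 hA a b) (Setoid.ext_iff.1 hB a b)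

section Identities

variable {Ω α β γ δ : Type} [Fintype Ω] [Fintype α] [Fintype β] [Fintype γ] [Fintype δ]
  [DecidableEq α] [DecidableEq β] [DecidableEq γ] [DecidableEq δ] {p : Ω → ℝ}

lemma condMutualInfo_congr {α' β' γ' : Type} [Fintype α'] [Fintype β'] [Fintype γ']
    [DecidableEq α'] [DecidableEq β'] [DecidableEq γ'] (hp0 : ∀ ω, 0 ≤ p ω)
    {X : Ω → α} {X' : Ω → α'} {Y : Ω → β} {Y' : Ω → β'} {Z : Ω → γ} {Z' : Ω → γ'}
    (hX : Setoid.ker X = Setoid.ker X') (hY : Setoid.ker Y = Setoid.ker Y')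
    (hZ : Setoid.ker Z = Setoid.ker Z') :
    condMutualInfo p X Y Z = condMutualInfo p X' Y' Z' := by
  simp only [condMutualInfo_eq hp0]
  rw [entropy_congr (Setoid.ker_prodMk_congr hX hZ), entropy_congr (Setoid.ker_prodMk_congr hY hZ),
    entropy_congr (Setoid.ker_prodMk_congr hX (Setoid.ker_prodMk_congr hY hZ)), entropy_congr hZ]

lemma condMutualInfo_comm (hp0 : ∀ ω, 0 ≤ p ω) (X : Ω → α) (Y : Ω → β) (Z : Ω → γ) :
    condMutualInfo p X Y Z = condMutualInfo p Y X Z := by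
  have hswap : entropy p (fun ω => (X ω, Y ω, Z ω)) = entropy p (fun ω => (Y ω, X ω, Z ω)) :=
    entropy_congr <| Setoid.ext fun _ _ => by
      simp only [Setoid.ker_def, Prod.mk.injEq, and_left_comm]
  rw [condMutualInfo_eq hp0, condMutualInfo_eq hp0, hswap]
  ring

lemma condMutualInfo_chain_rule (hp0 : ∀ ω, 0 ≤ p ω) (A : Ω → α) (B : Ω → β) (C : Ω → γ)
    (Z : Ω → δ) :
    condMutualInfo p A (fun ω => (B ω, C ω)) Z =
      condMutualInfo p A C Z + condMutualInfo p A B (fun ω => (C ω, Z ω)) := by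
  have hBC : entropy p (fun ω => ((B ω, C ω), Z ω)) = entropy p (fun ω => (B ω, C ω, Z ω)) :=
    entropy_congr <| Setoid.ext fun _ _ => by
      simp only [Setoid.ker_def, Prod.mk.injEq, and_assoc]
  have hABC : entropy p (fun ω => (A ω, (B ω, C ω), Z ω)) =
      entropy p (fun ω => (A ω, B ω, C ω, Z ω)) :=
    entropy_congr <| Setoid.ext fun _ _ => by
      simp only [Setoid.ker_def, Prod.mk.injEq, and_assoc]
  simp only [condMutualInfo_eq hp0, hBC, hABC]
  ring

lemma condMutualInfo_eq_sum (hp0 : ∀ ω, 0 ≤ p ω) (X : Ω → α) (Y : Ω → β) (Z : Ω → γ) :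
    condMutualInfo p X Y Z = ∑ ω, p ω *
      (log (distOf p (fun ω => (X ω, Y ω, Z ω)) (X ω, Y ω, Z ω)) + log (distOf p Z (Z ω)) -
        log (distOf p (fun ω => (X ω, Z ω)) (X ω, Z ω)) -
        log (distOf p (fun ω => (Y ω, Z ω)) (Y ω, Z ω))) := by
  simp only [condMutualInfo_eq hp0, entropy_eq_sum, mul_add, mul_sub, sum_add_distrib,
    sum_sub_distrib]
  ring

lemma condMutualInfo_eq_zero_of_condIndep (hp0 : ∀ ω, 0 ≤ p ω) {X : Ω → α} {Y : Ω → β}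
    {Z : Ω → γ} (h : CondIndep p X Y Z) : condMutualInfo p X Y Z = 0 := by
  rw [condMutualInfo_eq_sum hp0]
  refine sum_eq_zero fun ω _ => ?_
  rcases (hp0 ω).eq_or_lt with hω | hω
  · simp [← hω]
  have hlog := congrArg log (h (X ω) (Y ω) (Z ω))
  rw [log_mul (distOf_self_pos hp0 _ hω).ne' (distOf_self_pos hp0 _ hω).ne',
    log_mul (distOf_self_pos hp0 _ hω).ne' (distOf_self_pos hp0 _ hω).ne'] at hlog
  rw [hlog]
  ring

lemma condMutualInfo_eq_zero_of_subsingleton [Subsingleton α] (hp0 : ∀ ω, 0 ≤ p ω)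
    (X : Ω → α) (Y : Ω → β) (Z : Ω → γ) : condMutualInfo p X Y Z = 0 := by
  have hXZ : entropy p (fun ω => (X ω, Z ω)) = entropy p Z :=
    entropy_congr <| Setoid.ext fun a b => by
      simp [Setoid.ker_def, Subsingleton.elim (X a) (X b)]
  have hXYZ : entropy p (fun ω => (X ω, Y ω, Z ω)) = entropy p (fun ω => (Y ω, Z ω)) :=
    entropy_congr <| Setoid.ext fun a b => by
      simp [Setoid.ker_def, Subsingleton.elim (X a) (X b)]
  rw [condMutualInfo_eq hp0, hXZ, hXYZ]
  ring

end Identities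

section Nonneg

variable {Ω α β γ : Type} [Fintype Ω] [Fintype α] [Fintype β] [Fintype γ]
  [DecidableEq α] [DecidableEq β] [DecidableEq γ] {p : Ω → ℝ}

lemma mutualInfo_nonneg (hp0 : ∀ ω, 0 ≤ p ω) (hp1 : ∑ ω, p ω = 1) (X : Ω → α) (Y : Ω → β) :
    0 ≤ mutualInfo p X Y := by
  set XY : Ω → α × β := fun ω => (X ω, Y ω)
  -- Gibbs' inequality, from `1 - x⁻¹ ≤ log x` at the likelihood ratio `x` of the joint law
  -- against the product of the marginals; `r` is that ratio inverted.
  set r : α × β → ℝ := fun a => distOf p X a.1 * distOf p Y a.2 / distOf p XY a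
  have hr : ∑ ω, p ω * r (XY ω) ≤ 1 := by
    rw [← sum_distOf_mul p XY r]
    calc ∑ a, distOf p XY a * r a ≤ ∑ a : α × β, distOf p X a.1 * distOf p Y a.2 :=
          sum_le_sum fun a _ => by
            rcases eq_or_ne (distOf p XY a) 0 with h | h
            · rw [h, zero_mul]
              exact mul_nonneg (distOf_nonneg hp0 X _) (distOf_nonneg hp0 Y _)
            · exact (mul_div_cancel₀ _ h).le
      _ = 1 := by rw [Fintype.sum_prod_type, ← Fintype.sum_mul_sum, sum_distOf, sum_distOf, hp1, one_mul]
  have hpt ω : p ω * (1 - r (XY ω)) ≤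
      p ω * (log (distOf p XY (XY ω)) - log (distOf p X (X ω)) - log (distOf p Y (Y ω))) := by
    rcases (hp0 ω).eq_or_lt with hω | hω
    · simp [← hω]
    have hX := distOf_self_pos hp0 X hω
    have hY := distOf_self_pos hp0 Y hω
    have hXY := distOf_self_pos hp0 XY hω
    have hlog := one_sub_inv_le_log_of_pos (div_pos hXY (mul_pos hX hY))
    rw [inv_div, log_div hXY.ne' (mul_pos hX hY).ne', log_mul hX.ne' hY.ne'] at hlog
    exact mul_le_mul_of_nonneg_left (by simpa [r, sub_sub] using hlog) hω.le
  have hsum := sum_le_sum fun ω (_ : ω ∈ univ) => hpt ω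
  simp only [mul_sub, mul_one, sum_sub_distrib, hp1] at hsum
  rw [mutualInfo_eq hp0]
  simp only [entropy_eq_sum]
  linarith

lemma condMutualInfo_nonneg (hp0 : ∀ ω, 0 ≤ p ω) (X : Ω → α) (Y : Ω → β)
    (Z : Ω → γ) : 0 ≤ condMutualInfo p X Y Z :=
  sum_nonneg fun z _ => by
    rcases eq_or_ne (distOf p Z z) 0 with hz | hz
    · simp [hz]
    · exact mul_nonneg (distOf_nonneg hp0 Z z)
        (mutualInfo_nonneg (condProb_nonneg hp0 Z z) (sum_condProb hz) X Y)

end Nonneg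

section Feedback

variable {Ω α β γ δ : Type} [Fintype Ω] [Fintype α] [Fintype β] [Fintype γ] [Fintype δ]
  [DecidableEq α] [DecidableEq β] [DecidableEq γ] [DecidableEq δ] {p : Ω → ℝ}

lemma condMutualInfo_eq_sub_of_condIndep (hp0 : ∀ ω, 0 ≤ p ω) {A : Ω → α} {B : Ω → β}
    {V : Ω → γ} {Z : Ω → δ} (h : CondIndep p A V (fun ω => (B ω, Z ω))) :
    condMutualInfo p A V Z =
      condMutualInfo p A B Z - condMutualInfo p A B (fun ω => (V ω, Z ω)) := by
  have hswap : condMutualInfo p A (fun ω => (B ω, V ω)) Z =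
      condMutualInfo p A (fun ω => (V ω, B ω)) Z :=
    condMutualInfo_congr hp0 rfl (Setoid.ext fun _ _ => by
      simp only [Setoid.ker_def, Prod.mk.injEq, and_comm]) rfl
  have hBV := condMutualInfo_chain_rule hp0 A B V Z
  have hVB := condMutualInfo_chain_rule hp0 A V B Z
  rw [condMutualInfo_eq_zero_of_condIndep hp0 h] at hVB
  linarith

lemma condMutualInfo_prodMk_left_of_condIndep (hp0 : ∀ ω, 0 ≤ p ω) {A : Ω → α} {B : Ω → β}
    {C : Ω → γ} {Z : Ω → δ} (h : CondIndep p A B (fun ω => (C ω, Z ω))) :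
    condMutualInfo p (fun ω => (A ω, C ω)) B Z = condMutualInfo p C B Z := by
  rw [condMutualInfo_comm hp0, condMutualInfo_chain_rule hp0,
    condMutualInfo_comm hp0 B A, condMutualInfo_eq_zero_of_condIndep hp0 h, add_zero,
    condMutualInfo_comm hp0]

end Feedback

section Blocks

lemma Setoid.ker_prefixRV_succ {Ω 𝒳 : Type} (X : ℕ → Ω → 𝒳) (t : ℕ) :
    Setoid.ker (prefixRV X (t + 1)) = Setoid.ker fun ω => (X t ω, prefixRV X t ω) :=
  Setoid.ext fun _ _ => by
    simp only [Setoid.ker_def, Prod.mk.injEq, funext_iff, prefixRV, Fin.forall_fin_succ',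
      Fin.val_castSucc, Fin.val_last, and_comm]

variable {Ω α 𝒳 𝒴 𝒰 : Type} [Fintype Ω] [Fintype α] [Fintype 𝒳] [Fintype 𝒴] [Fintype 𝒰]
  [DecidableEq α] [DecidableEq 𝒳] [DecidableEq 𝒴] [DecidableEq 𝒰] {p : Ω → ℝ}

lemma condMutualInfo_input_eq_of_condIndep (hp0 : ∀ ω, 0 ≤ p ω) (A : Ω → α) (Y : ℕ → Ω → 𝒴)
    (U : ℕ → Ω → 𝒰) (t : ℕ)
    (h : CondIndep p A (U t) (fun ω => (prefixRV Y (t + 1) ω, prefixRV U t ω))) :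
    condMutualInfo p A (U t) (prefixRV U t) =
      condMutualInfo p A (prefixRV Y t) (prefixRV U t) +
        condMutualInfo p A (Y t) (fun ω => (prefixRV Y t ω, prefixRV U t ω)) -
        condMutualInfo p A (prefixRV Y (t + 1)) (prefixRV U (t + 1)) := by
  rw [condMutualInfo_eq_sub_of_condIndep hp0 h,
    condMutualInfo_congr hp0 rfl (Setoid.ker_prefixRV_succ Y t) rfl,
    condMutualInfo_chain_rule hp0,
    condMutualInfo_congr hp0 rfl rfl (Setoid.ker_prefixRV_succ U t).symm]

lemma condMutualInfo_prefixRV_succ_left (hp0 : ∀ ω, 0 ≤ p ω) (X : ℕ → Ω → 𝒳)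
    (Y : ℕ → Ω → 𝒴) (U : ℕ → Ω → 𝒰) (t : ℕ)
    (h : CondIndep p (X t) (prefixRV Y t) (fun ω => (prefixRV X t ω, prefixRV U t ω))) :
    condMutualInfo p (prefixRV X (t + 1)) (prefixRV Y t) (prefixRV U t) =
      condMutualInfo p (prefixRV X t) (prefixRV Y t) (prefixRV U t) := by
  rw [condMutualInfo_congr hp0 (Setoid.ker_prefixRV_succ X t) rfl rfl,
    condMutualInfo_prodMk_left_of_condIndep hp0 h]

end Blocks

/-- 0-based indexing: stage `t + 1` of the paper is index `t` here. -/
theorem stmt3_general {Ω 𝒳 𝒴 𝒰 : Type} [Fintype Ω] [Fintype 𝒳] [Fintype 𝒴] [Fintype 𝒰]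
    [DecidableEq 𝒳] [DecidableEq 𝒴] [DecidableEq 𝒰]
    (p : Ω → ℝ) (hp0 : ∀ ω, 0 ≤ p ω)
    (T : ℕ) (X : ℕ → Ω → 𝒳) (Y : ℕ → Ω → 𝒴) (U : ℕ → Ω → 𝒰)
    (hcontrol : ∀ t < T, CondIndep p (prefixRV X (t + 1)) (U t)
      (fun ω => (prefixRV Y (t + 1) ω, prefixRV U t ω)))
    (hplant : ∀ t < T, CondIndep p (X t) (prefixRV Y t)
      (fun ω => (prefixRV X t ω, prefixRV U t ω))) :
    ∑ t ∈ Finset.range T,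
        condMutualInfo p (prefixRV X (t + 1)) (U t) (prefixRV U t) ≤
      ∑ t ∈ Finset.range T,
        condMutualInfo p (prefixRV X (t + 1)) (Y t)
          (fun ω => (prefixRV Y t ω, prefixRV U t ω)) := by
  set b : ℕ → ℝ := fun s => condMutualInfo p (prefixRV X s) (prefixRV Y s) (prefixRV U s)
  have hstep : ∀ t ∈ range T,
      condMutualInfo p (prefixRV X (t + 1)) (U t) (prefixRV U t) =
        condMutualInfo p (prefixRV X (t + 1)) (Y t)
          (fun ω => (prefixRV Y t ω, prefixRV U t ω)) + (b t - b (t + 1)) := fun t ht => by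
    rw [condMutualInfo_input_eq_of_condIndep hp0 _ Y U t (hcontrol t (mem_range.1 ht)),
      condMutualInfo_prefixRV_succ_left hp0 X Y U t (hplant t (mem_range.1 ht))]
    ring
  have hb0 : b 0 = 0 := condMutualInfo_eq_zero_of_subsingleton hp0 _ _ _
  have hbT : 0 ≤ b T := condMutualInfo_nonneg hp0 _ _ _
  rw [sum_congr rfl hstep, sum_add_distrib, sum_range_sub', hb0]
  linarith

/-- Under the feedback structure of cloud-based control
(for each stage `t`: (i) `X^t ⟂ U_t | (Y^t, U^{t-1})` and
(ii) `X_t ⟂ Y^{t-1} | (X^{t-1}, U^{t-1})`), the directed information is bounded by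
the causally conditioned directed information:
`I(X^T → U^T) ≤ I(X^T → Y^T ‖ U^{T-1})`.
(0-based indexing: stage `t + 1` of the paper corresponds to index `t` here, and
`prefixRV X t` is the block `X^t` of the first `t` entries.) -/
theorem stmt3 {Ω 𝒳 𝒴 𝒰 : Type} [Fintype Ω] [Fintype 𝒳] [Fintype 𝒴] [Fintype 𝒰]
    [DecidableEq 𝒳] [DecidableEq 𝒴] [DecidableEq 𝒰]
    (p : Ω → ℝ) (hp0 : ∀ ω, 0 ≤ p ω) (hp1 : ∑ ω, p ω = 1)
    (T : ℕ) (X : ℕ → Ω → 𝒳) (Y : ℕ → Ω → 𝒴) (U : ℕ → Ω → 𝒰)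
    (hcontrol : ∀ t < T, CondIndep p (prefixRV X (t + 1)) (U t)
      (fun ω => (prefixRV Y (t + 1) ω, prefixRV U t ω)))
    (hplant : ∀ t < T, CondIndep p (X t) (prefixRV Y t)
      (fun ω => (prefixRV X t ω, prefixRV U t ω))) :
    ∑ t ∈ Finset.range T,
        condMutualInfo p (prefixRV X (t + 1)) (U t) (prefixRV U t) ≤
      ∑ t ∈ Finset.range T,
        condMutualInfo p (prefixRV X (t + 1)) (Y t)
          (fun ω => (prefixRV Y t ω, prefixRV U t ω)) :=
  stmt3_general p hp0 T X Y U hcontrol hplant
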